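/- arXiv:2206.02445 — 2 statements merged into one kernel-verified Lean document; each statement's English description precedes it below -/
import Mathlib

section
/- For B ≠ 0 and any constant C, the function y(x) = ln(2B²/cosh²(Bx + C)) satisfies the differential equation e^{-y(x)} y''(x) + 1 = 0 for all real x. -/
/-!
Writing y(x) = log (2B²) - 2 log cosh (Bx + C) gives y' = -2B tanh (Bx + C) and
y'' = -2B² / cosh² (Bx + C), which is exactly -e^y.
-/

open Real

section AffineReparametrization

variable {𝕜 : Type*} [NontriviallyNormedField 𝕜] (f : 𝕜 → 𝕜) (a b x : 𝕜)

theorem deriv_comp_mul_add : deriv (fun x ↦ f (a * x + b)) x = a * deriv f (a * x + b) := by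
  rw [deriv_comp_mul_left a (fun u ↦ f (u + b)), deriv_comp_add_const, smul_eq_mul]

theorem deriv_deriv_comp_mul_add :
    deriv (deriv fun x ↦ f (a * x + b)) x = a ^ 2 * deriv (deriv f) (a * x + b) := by
  rw [funext (deriv_comp_mul_add f a b), deriv_const_mul_field, deriv_comp_mul_add]
  ring

end AffineReparametrization

namespace Real

theorem deriv_log_cosh : deriv (fun t ↦ log (cosh t)) = tanh := by
  funext t
  rw [tanh_eq_sinh_div_cosh]
  exact ((hasDerivAt_cosh t).log (cosh_pos t).ne').deriv

theorem hasDerivAt_tanh (t : ℝ) : HasDerivAt tanh (cosh t ^ 2)⁻¹ t := by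
  rw [show tanh = fun t ↦ sinh t / cosh t from funext tanh_eq_sinh_div_cosh]
  refine ((hasDerivAt_sinh t).div (hasDerivAt_cosh t) (cosh_pos t).ne').congr_deriv ?_
  rw [← sq, ← sq, cosh_sq_sub_sinh_sq, one_div]

theorem log_div_cosh_sq {a : ℝ} (ha : a ≠ 0) (t : ℝ) :
    log (a / cosh t ^ 2) = log a - 2 * log (cosh t) := by
  rw [log_div ha (pow_ne_zero 2 (cosh_pos t).ne'), log_pow]
  norm_num

theorem deriv_log_div_cosh_sq {a : ℝ} (ha : a ≠ 0) :
    deriv (fun t ↦ log (a / cosh t ^ 2)) = fun t ↦ -2 * tanh t := by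
  funext t
  simp only [log_div_cosh_sq ha, deriv_const_sub, deriv_const_mul_field, deriv_log_cosh]
  ring

theorem deriv_deriv_log_div_cosh_sq {a : ℝ} (ha : a ≠ 0) (t : ℝ) :
    deriv (deriv fun t ↦ log (a / cosh t ^ 2)) t = -2 / cosh t ^ 2 := by
  rw [deriv_log_div_cosh_sq ha, deriv_const_mul_field, (hasDerivAt_tanh t).deriv]
  ring

end Real

theorem stmt1 (B C : ℝ) (hB : B ≠ 0) (y : ℝ → ℝ)
    (hy : y = fun x => Real.log (2 * B ^ 2 / Real.cosh (B * x + C) ^ 2)) :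
    ∀ x : ℝ, Real.exp (-(y x)) * deriv (deriv y) x + 1 = 0 := by
  intro x
  have h2B : 2 * B ^ 2 ≠ 0 := by positivity
  have hy'' : deriv (deriv y) x = -2 * B ^ 2 / cosh (B * x + C) ^ 2 := by
    rw [hy, deriv_deriv_comp_mul_add (fun t ↦ log (2 * B ^ 2 / cosh t ^ 2)),
      deriv_deriv_log_div_cosh_sq h2B]
    ring
  have hcosh : cosh (B * x + C) ≠ 0 := (cosh_pos _).ne'
  rw [hy'', hy, exp_neg, exp_log (by positivity)]
  field_simp
  ring
end

section
/- The equation tanh(B/2) = 2/B has a unique solution B* in (2, ∞), and for symmetric boundary data ȳ, the equation cosh(B/2) = √2 B e^{-ȳ/2} in B > 0 has exactly two solutions when ȳ < 2 ln(2√2/sinh(B*/2)), exactly one when ȳ equals this value, and none when ȳ exceeds it. -/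
/-!
With `f B = √2 B / cosh (B/2)` (here `SymmetricBVP.level`), the boundary equation reads
`f B = exp (ȳ/2)`. The derivative of `f` has the sign of `2 cosh (B/2) - B sinh (B/2)`, which is
strictly decreasing on `[0, ∞)`, positive at `2` and negative at `4`; its only zero `B*` is the
root of `tanh (B*/2) = 2/B*`. So `f` rises strictly from `f 0 = 0` to `f B* = 2√2 / sinh (B*/2)`
and then decreases strictly to `0`, and a positive level is attained twice, once or never
according as it lies below, at or above `f B*`.
-/

open Real Set Filter Topology

section Peak

variable {f : ℝ → ℝ} {a m c : ℝ}

theorem lt_of_strictMonoOn_of_strictAntiOn (hmono : StrictMonoOn f (Icc a m))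
    (hanti : StrictAntiOn f (Ici m)) {x : ℝ} (hx : a ≤ x) (hxm : x ≠ m) : f x < f m := by
  rcases hxm.lt_or_gt with h | h
  · exact hmono ⟨hx, h.le⟩ ⟨hx.trans h.le, le_rfl⟩ h
  · exact hanti self_mem_Ici h.le h

theorem eq_of_strictMonoOn_of_strictAntiOn (hmono : StrictMonoOn f (Icc a m))
    (hanti : StrictAntiOn f (Ici m)) {x : ℝ} (hx : a ≤ x) (hfx : f x = f m) : x = m :=
  by_contra fun hxm => (lt_of_strictMonoOn_of_strictAntiOn hmono hanti hx hxm).ne hfx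

theorem ne_of_strictMonoOn_of_strictAntiOn (hmono : StrictMonoOn f (Icc a m))
    (hanti : StrictAntiOn f (Ici m)) (hmc : f m < c) {x : ℝ} (hx : a ≤ x) : f x ≠ c := by
  rcases eq_or_ne x m with rfl | hxm
  · exact hmc.ne
  · exact ((lt_of_strictMonoOn_of_strictAntiOn hmono hanti hx hxm).trans hmc).ne

theorem exists_pair_of_strictMonoOn_of_strictAntiOn {l : ℝ} (hf : ContinuousOn f (Ici a))
    (ham : a ≤ m) (hmono : StrictMonoOn f (Icc a m)) (hanti : StrictAntiOn f (Ici m))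
    (hlim : Tendsto f atTop (𝓝 l)) (hac : f a < c) (hlc : l < c) (hcm : c < f m) :
    ∃ x₁ x₂, a < x₁ ∧ a < x₂ ∧ x₁ ≠ x₂ ∧ f x₁ = c ∧ f x₂ = c ∧
      ∀ x, a < x → f x = c → x = x₁ ∨ x = x₂ := by
  obtain ⟨x₁, ⟨hax₁, hx₁m⟩, hfx₁⟩ :=
    intermediate_value_Ioo ham (hf.mono Icc_subset_Ici_self) ⟨hac, hcm⟩
  obtain ⟨b, hfb, hmb⟩ := ((hlim.eventually (gt_mem_nhds hlc)).and (eventually_ge_atTop m)).exists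
  obtain ⟨x₂, ⟨hmx₂, -⟩, hfx₂⟩ :=
    intermediate_value_Ioo' hmb (hf.mono (Icc_subset_Ici_iff hmb |>.2 ham)) ⟨hfb, hcm⟩
  refine ⟨x₁, x₂, hax₁, ham.trans_lt hmx₂, (hx₁m.trans hmx₂).ne, hfx₁, hfx₂, fun x hax hfx => ?_⟩
  rcases le_or_gt x m with hxm | hxm
  · exact .inl <| hmono.injOn ⟨hax.le, hxm⟩ ⟨hax₁.le, hx₁m.le⟩ (hfx.trans hfx₁.symm)
  · exact .inr <| hanti.injOn hxm.le hmx₂.le (hfx.trans hfx₂.symm)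

end Peak

namespace SymmetricBVP

noncomputable def level (B : ℝ) : ℝ := √2 * B / cosh (B / 2)

noncomputable def levelDerivNum (B : ℝ) : ℝ := 2 * cosh (B / 2) - B * sinh (B / 2)

theorem hasDerivAt_levelDerivNum (B : ℝ) :
    HasDerivAt levelDerivNum (-(B / 2 * cosh (B / 2))) B := by
  have hhalf : HasDerivAt (fun B : ℝ => B / 2) (1 / 2) B := (hasDerivAt_id' B).div_const 2
  exact ((hhalf.cosh.const_mul 2).sub ((hasDerivAt_id' B).mul hhalf.sinh)).congr_deriv (by ring)

theorem levelDerivNum_strictAntiOn : StrictAntiOn levelDerivNum (Ici 0) := by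
  refine strictAntiOn_of_deriv_neg (convex_Ici 0)
    (fun B _ => (hasDerivAt_levelDerivNum B).continuousAt.continuousWithinAt) fun B hB => ?_
  rw [interior_Ici] at hB
  rw [(hasDerivAt_levelDerivNum B).deriv, neg_neg_iff_pos]
  exact mul_pos (half_pos hB) (cosh_pos _)

theorem exists_levelDerivNum_eq_zero : ∃ B, 2 < B ∧ levelDerivNum B = 0 := by
  have h2 : 0 < levelDerivNum 2 := by
    simpa [levelDerivNum] using sinh_lt_cosh 1
  have h4 : levelDerivNum 4 < 0 := by
    have he : 3 ≤ exp 2 := by linarith [add_one_le_exp 2]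
    have he' : exp (-2) < 1 := exp_lt_one_iff.2 (by norm_num)
    norm_num [levelDerivNum, cosh_eq, sinh_eq]
    linarith
  obtain ⟨B, ⟨h2B, -⟩, hB⟩ := intermediate_value_Ioo' (by norm_num : (2 : ℝ) ≤ 4)
    (fun B _ => (hasDerivAt_levelDerivNum B).continuousAt.continuousWithinAt) ⟨h4, h2⟩
  exact ⟨B, h2B, hB⟩

theorem tanh_half_eq_two_div_iff {B : ℝ} (hB : 0 < B) :
    tanh (B / 2) = 2 / B ↔ levelDerivNum B = 0 := by
  rw [tanh_eq_sinh_div_cosh, div_eq_div_iff (cosh_pos _).ne' hB.ne', levelDerivNum, sub_eq_zero]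
  constructor <;> intro h <;> linarith

theorem hasDerivAt_level (B : ℝ) :
    HasDerivAt level (√2 * levelDerivNum B / (2 * cosh (B / 2) ^ 2)) B := by
  have hcosh := ((hasDerivAt_id' B).div_const 2).cosh
  exact (((hasDerivAt_id' B).const_mul √2).div hcosh (cosh_pos _).ne').congr_deriv (by
    rw [levelDerivNum]; field_simp)

theorem continuous_level : Continuous level :=
  continuous_iff_continuousAt.2 fun B => (hasDerivAt_level B).continuousAt

variable {Bs : ℝ}

theorem level_strictMonoOn (hBs : levelDerivNum Bs = 0) : StrictMonoOn level (Icc 0 Bs) := by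
  refine strictMonoOn_of_deriv_pos (convex_Icc 0 Bs) continuous_level.continuousOn
    fun B hB => ?_
  rw [interior_Icc] at hB
  have hpos : 0 < levelDerivNum B := hBs ▸
    levelDerivNum_strictAntiOn hB.1.le (hB.1.trans hB.2).le hB.2
  rw [(hasDerivAt_level B).deriv]
  positivity

theorem level_strictAntiOn (hBs0 : 0 ≤ Bs) (hBs : levelDerivNum Bs = 0) :
    StrictAntiOn level (Ici Bs) := by
  refine strictAntiOn_of_deriv_neg (convex_Ici Bs) continuous_level.continuousOn
    fun B hB => ?_
  rw [interior_Ici] at hB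
  have hneg : levelDerivNum B < 0 := hBs ▸
    levelDerivNum_strictAntiOn hBs0 (hBs0.trans hB.le) hB
  rw [(hasDerivAt_level B).deriv]
  exact div_neg_of_neg_of_pos (mul_neg_of_pos_of_neg (by positivity) hneg) (by positivity)

theorem sq_div_sixteen_le_cosh_half {B : ℝ} (hB : 0 ≤ B) : B ^ 2 / 16 ≤ cosh (B / 2) := by
  have := quadratic_le_exp_of_nonneg (by positivity : 0 ≤ B / 2)
  rw [cosh_eq]
  nlinarith [exp_pos (-(B / 2))]

theorem tendsto_level_atTop : Tendsto level atTop (𝓝 0) := by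
  have hlim : Tendsto (fun B : ℝ => 16 * √2 / B) atTop (𝓝 0) :=
    tendsto_const_nhds.div_atTop tendsto_id
  refine tendsto_of_tendsto_of_tendsto_of_le_of_le' tendsto_const_nhds hlim ?_ ?_
  · filter_upwards [eventually_ge_atTop 0] with B hB
    exact div_nonneg (by positivity) (cosh_pos _).le
  · filter_upwards [eventually_gt_atTop 0] with B hB
    rw [level, div_le_div_iff₀ (cosh_pos _) hB]
    nlinarith [sq_div_sixteen_le_cosh_half hB.le, sqrt_nonneg 2]

theorem level_eq_of_levelDerivNum_eq_zero (hBs : levelDerivNum Bs = 0) :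
    level Bs = 2 * √2 / sinh (Bs / 2) := by
  rw [levelDerivNum, sub_eq_zero] at hBs
  have hsinh : sinh (Bs / 2) ≠ 0 :=
    right_ne_zero_of_mul (hBs ▸ (by positivity : 2 * cosh (Bs / 2) ≠ 0))
  rw [level, div_eq_div_iff (cosh_pos _).ne' hsinh]
  linear_combination (-√2) * hBs

theorem cosh_half_eq_iff (B y : ℝ) :
    cosh (B / 2) = √2 * B * exp (-y / 2) ↔ level B = exp (y / 2) := by
  rw [level, div_eq_iff (cosh_pos _).ne', neg_div, exp_neg, ← div_eq_mul_inv,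
    eq_div_iff (exp_pos _).ne']
  constructor <;> intro h <;> linarith

end SymmetricBVP

open SymmetricBVP in
theorem stmt3 :
    ∃! Bstar : ℝ, Bstar ∈ Set.Ioi (2:ℝ) ∧ Real.tanh (Bstar / 2) = 2 / Bstar ∧
      ∀ ybar : ℝ,
        ((ybar < 2 * Real.log (2 * Real.sqrt 2 / Real.sinh (Bstar / 2)) →
          ∃ B₁ B₂ : ℝ, 0 < B₁ ∧ 0 < B₂ ∧ B₁ ≠ B₂ ∧
            Real.cosh (B₁ / 2) = Real.sqrt 2 * B₁ * Real.exp (-ybar / 2) ∧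
            Real.cosh (B₂ / 2) = Real.sqrt 2 * B₂ * Real.exp (-ybar / 2) ∧
            ∀ B : ℝ, 0 < B → Real.cosh (B / 2) = Real.sqrt 2 * B * Real.exp (-ybar / 2) →
              B = B₁ ∨ B = B₂) ∧
        (ybar = 2 * Real.log (2 * Real.sqrt 2 / Real.sinh (Bstar / 2)) →
          ∃! B : ℝ, 0 < B ∧ Real.cosh (B / 2) = Real.sqrt 2 * B * Real.exp (-ybar / 2)) ∧
        (ybar > 2 * Real.log (2 * Real.sqrt 2 / Real.sinh (Bstar / 2)) →
          ¬ ∃ B : ℝ, 0 < B ∧ Real.cosh (B / 2) = Real.sqrt 2 * B * Real.exp (-ybar / 2))) := by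
  obtain ⟨Bs, hBs2, hBs⟩ := exists_levelDerivNum_eq_zero
  have hBs0 : 0 < Bs := by linarith
  have hmono := level_strictMonoOn hBs
  have hanti := level_strictAntiOn hBs0.le hBs
  have hpeak : 0 < level Bs := by rw [level]; positivity
  simp only [mem_Ioi, cosh_half_eq_iff]
  refine ⟨Bs, ⟨hBs2, (tanh_half_eq_two_div_iff hBs0).2 hBs, fun ybar => ?_⟩, ?_⟩
  · rw [← level_eq_of_levelDerivNum_eq_zero hBs]
    refine ⟨fun h => ?_, fun h => ?_, fun h => ?_⟩
    · exact exists_pair_of_strictMonoOn_of_strictAntiOn continuous_level.continuousOn hBs0.le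
        hmono hanti tendsto_level_atTop (by simpa [level] using exp_pos _) (exp_pos _)
        ((lt_log_iff_exp_lt hpeak).1 (by linarith))
    · have hlevel : level Bs = exp (ybar / 2) := by
        rw [h, mul_div_cancel_left₀ _ two_ne_zero, exp_log hpeak]
      exact ⟨Bs, ⟨hBs0, hlevel⟩, fun B hB =>
        eq_of_strictMonoOn_of_strictAntiOn hmono hanti hB.1.le (hB.2.trans hlevel.symm)⟩
    · rintro ⟨B, hB, hlevel⟩
      exact ne_of_strictMonoOn_of_strictAntiOn hmono hanti
        ((log_lt_iff_lt_exp hpeak).1 (by linarith)) hB.le hlevel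
  · rintro B ⟨hB2, htanh, -⟩
    exact levelDerivNum_strictAntiOn.injOn (by linarith : (0:ℝ) ≤ B) hBs0.le
      (((tanh_half_eq_two_div_iff (by linarith)).1 htanh).trans hBs.symm)
end
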